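/- arXiv:0910.0932 — 2 statements merged into one kernel-verified Lean document; each statement's English description precedes it below -/
import Mathlib

section
/- Up to isomorphism, there are exactly four 2-dimensional complex associative algebras that are indecomposable (not a direct sum of two nonzero ideals) and nonzero: the algebras with nonzero products (1) e1e1=e2; (2) e1e1=e1, e1e2=e2; (3) e1e1=e1, e2e1=e2; (4) e1e1=e1, e1e2=e2, e2e1=e2. -/
abbrev V2 := Fin 2 → ℂ

/-- μ is a bilinear multiplication. -/
def IsBilinear (μ : V2 → V2 → V2) : Prop :=
  (∀ (a : ℂ) (x x' y : V2), μ (a • x + x') y = a • μ x y + μ x' y) ∧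
  (∀ (a : ℂ) (x y y' : V2), μ x (a • y + y') = a • μ x y + μ x y')

def IsAssoc (μ : V2 → V2 → V2) : Prop :=
  ∀ x y z, μ (μ x y) z = μ x (μ y z)

/-- `I` is a two-sided ideal of the algebra `(V2, μ)`. -/
def IsIdeal (μ : V2 → V2 → V2) (I : Submodule ℂ V2) : Prop :=
  ∀ x y, x ∈ I → μ x y ∈ I ∧ μ y x ∈ I

/-- The algebra is not a direct sum of two nonzero two-sided ideals. -/
def Indecomposable (μ : V2 → V2 → V2) : Prop :=
  ¬ ∃ I J : Submodule ℂ V2,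
      IsIdeal μ I ∧ IsIdeal μ J ∧ I ≠ ⊥ ∧ J ≠ ⊥ ∧ IsCompl I J

def Iso (μ ν : V2 → V2 → V2) : Prop :=
  ∃ f : V2 ≃ₗ[ℂ] V2, ∀ x y, f (μ x y) = ν (f x) (f y)

/-- (1) e1e1 = e2. -/
def m1 (x y : V2) : V2 := fun k => if k = 1 then x 0 * y 0 else 0
/-- (2) e1e1 = e1, e1e2 = e2. -/
def m2 (x y : V2) : V2 := fun k => if k = 0 then x 0 * y 0 else x 0 * y 1
/-- (3) e1e1 = e1, e2e1 = e2. -/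
def m3 (x y : V2) : V2 := fun k => if k = 0 then x 0 * y 0 else x 1 * y 0
/-- (4) e1e1 = e1, e1e2 = e2, e2e1 = e2. -/
def m4 (x y : V2) : V2 :=
  fun k => if k = 0 then x 0 * y 0 else x 0 * y 1 + x 1 * y 0

section infra

variable {μ : V2 → V2 → V2}

theorem bl_zero_left (hb : IsBilinear μ) (y : V2) : μ 0 y = 0 := by
  have h := hb.1 1 0 0 y
  simp at h
  exact h

theorem bl_zero_right (hb : IsBilinear μ) (x : V2) : μ x 0 = 0 := by
  have h := hb.2 1 x 0 0
  simp at h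
  exact h

theorem bl_add_left (hb : IsBilinear μ) (x x' y : V2) : μ (x + x') y = μ x y + μ x' y := by
  have h := hb.1 1 x x' y; simpa using h

theorem bl_add_right (hb : IsBilinear μ) (x y y' : V2) : μ x (y + y') = μ x y + μ x y' := by
  have h := hb.2 1 x y y'; simpa using h

theorem bl_smul_left (hb : IsBilinear μ) (a : ℂ) (x y : V2) : μ (a • x) y = a • μ x y := by
  have h := hb.1 a x 0 y
  simpa [bl_zero_left hb] using h

theorem bl_smul_right (hb : IsBilinear μ) (a : ℂ) (x y : V2) : μ x (a • y) = a • μ x y := by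
  have h := hb.2 a x y 0
  simpa [bl_zero_right hb] using h

theorem bl_expand (hb : IsBilinear μ) (a b c d : ℂ) (v w v' w' : V2) :
    μ (a • v + b • w) (c • v' + d • w') =
      (a * c) • μ v v' + (a * d) • μ v w' + (b * c) • μ w v' + (b * d) • μ w w' := by
  simp only [bl_add_left hb, bl_add_right hb, bl_smul_left hb, bl_smul_right hb, smul_smul,
    smul_add]
  module

/-- determinant of the pair of vectors -/
def dt (v w : V2) : ℂ := v 0 * w 1 - v 1 * w 0

theorem vec_decomp (y : V2) : y = y 0 • ![(1:ℂ), 0] + y 1 • ![(0:ℂ), 1] := by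
  funext k; fin_cases k <;> simp

theorem nonzero_coord {v : V2} (hv : v ≠ 0) : v 0 ≠ 0 ∨ v 1 ≠ 0 := by
  by_contra h
  push_neg at h
  exact hv (by funext k; fin_cases k <;> simp [h.1, h.2])

theorem dt_ne_zero {v w : V2} (hv : v ≠ 0) (h : ∀ c : ℂ, w ≠ c • v) : dt v w ≠ 0 := by
  intro hd
  unfold dt at hd
  rcases nonzero_coord hv with h0 | h1
  · apply h (w 0 / v 0)
    funext k; fin_cases k
    · simp [div_mul_cancel₀, h0]
    · show w 1 = w 0 / v 0 * v 1
      rw [div_mul_eq_mul_div, eq_div_iff h0]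
      linear_combination hd
  · apply h (w 1 / v 1)
    funext k; fin_cases k
    · show w 0 = w 1 / v 1 * v 0
      rw [div_mul_eq_mul_div, eq_div_iff h1]
      linear_combination -hd
    · simp [div_mul_cancel₀, h1]

end infra

section infra2

variable {μ ν : V2 → V2 → V2}

/-- the linear auto of ℂ² sending e1 ↦ v, e2 ↦ w, for an independent pair. -/
noncomputable def mkE (v w : V2) (hd : dt v w ≠ 0) : V2 ≃ₗ[ℂ] V2 where
  toFun x := x 0 • v + x 1 • w
  invFun y := ![(w 1 * y 0 - w 0 * y 1) / dt v w, (v 0 * y 1 - v 1 * y 0) / dt v w]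
  left_inv x := by
    unfold dt at hd ⊢
    have hd' : w 1 * v 0 - w 0 * v 1 ≠ 0 := by contrapose! hd; linear_combination hd
    funext k; fin_cases k <;>
    · simp
      field_simp
      ring
  right_inv y := by
    unfold dt at hd ⊢
    have hd' : w 1 * v 0 - w 0 * v 1 ≠ 0 := by contrapose! hd; linear_combination hd
    funext k; fin_cases k <;>
    · simp
      field_simp
      ring
  map_add' x x' := by
    simp only [Pi.add_apply]
    module
  map_smul' a x := by
    simp only [Pi.smul_apply, smul_eq_mul, RingHom.id_apply]
    module

theorem mkE_apply (v w : V2) (hd : dt v w ≠ 0) (x : V2) :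
    mkE v w hd x = x 0 • v + x 1 • w := rfl

theorem decompose {v w : V2} (hd : dt v w ≠ 0) (y : V2) :
    ∃ α β : ℂ, y = α • v + β • w := by
  refine ⟨(w 1 * y 0 - w 0 * y 1) / dt v w, (v 0 * y 1 - v 1 * y 0) / dt v w, ?_⟩
  unfold dt at hd ⊢
  have hd' : w 1 * v 0 - w 0 * v 1 ≠ 0 := by contrapose! hd; linear_combination hd
  funext k; fin_cases k <;>
  · simp
    field_simp
    ring

theorem isCompl_span {v w : V2} (hd : dt v w ≠ 0) :
    IsCompl (Submodule.span ℂ {v}) (Submodule.span ℂ {w}) := by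
  constructor
  · rw [disjoint_iff]
    rw [Submodule.eq_bot_iff]
    rintro x ⟨hxv, hxw⟩
    obtain ⟨a, ha⟩ := Submodule.mem_span_singleton.mp hxv
    obtain ⟨b, hb⟩ := Submodule.mem_span_singleton.mp hxw
    have h0 : a * v 0 = b * w 0 := by
      have := congrFun (ha.trans hb.symm) 0; simpa using this
    have h1 : a * v 1 = b * w 1 := by
      have := congrFun (ha.trans hb.symm) 1; simpa using this
    have ha0 : a * dt v w = 0 := by unfold dt; linear_combination w 1 * h0 - w 0 * h1
    have : a = 0 := by
      rcases mul_eq_zero.mp ha0 with h | h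
      · exact h
      · exact absurd h hd
    rw [← ha, this, zero_smul]
  · rw [codisjoint_iff, eq_top_iff]
    intro y _
    obtain ⟨α, β, hy⟩ := decompose hd y
    rw [hy]
    exact Submodule.add_mem _
      (Submodule.mem_sup_left (Submodule.smul_mem _ _ (Submodule.mem_span_singleton_self v)))
      (Submodule.mem_sup_right (Submodule.smul_mem _ _ (Submodule.mem_span_singleton_self w)))

theorem iso_of_equiv (g : V2 ≃ₗ[ℂ] V2) (h : ∀ a b, μ (g a) (g b) = g (ν a b)) : Iso μ ν := by
  refine ⟨g.symm, fun x y => ?_⟩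
  apply g.injective
  rw [g.apply_symm_apply, ← h, g.apply_symm_apply, g.apply_symm_apply]

theorem iso_symm (h : Iso μ ν) : Iso ν μ := by
  obtain ⟨f, hf⟩ := h
  refine ⟨f.symm, fun x y => ?_⟩
  apply f.injective
  rw [f.apply_symm_apply, hf, f.apply_symm_apply, f.apply_symm_apply]

end infra2

section parts12

-- formula lemmas
theorem m1_eq (a b : V2) : m1 a b = ![0, a 0 * b 0] := by
  funext k; fin_cases k <;> simp [m1]
theorem m2_eq (a b : V2) : m2 a b = ![a 0 * b 0, a 0 * b 1] := by
  funext k; fin_cases k <;> simp [m2]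
theorem m3_eq (a b : V2) : m3 a b = ![a 0 * b 0, a 1 * b 0] := by
  funext k; fin_cases k <;> simp [m3]
theorem m4_eq (a b : V2) : m4 a b = ![a 0 * b 0, a 0 * b 1 + a 1 * b 0] := by
  funext k; fin_cases k <;> simp [m4]

theorem m1_bil : IsBilinear m1 := by
  constructor <;> intro a x x' y <;> funext k <;> fin_cases k <;> simp [m1] <;> ring
theorem m2_bil : IsBilinear m2 := by
  constructor <;> intro a x x' y <;> funext k <;> fin_cases k <;> simp [m2] <;> ring
theorem m3_bil : IsBilinear m3 := by
  constructor <;> intro a x x' y <;> funext k <;> fin_cases k <;> simp [m3] <;> ring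
theorem m4_bil : IsBilinear m4 := by
  constructor <;> intro a x x' y <;> funext k <;> fin_cases k <;> simp [m4] <;> ring

theorem m1_assoc : IsAssoc m1 := by
  intro x y z; funext k; fin_cases k <;> simp [m1]
theorem m2_assoc : IsAssoc m2 := by
  intro x y z; funext k; fin_cases k <;> simp [m2] <;> ring
theorem m3_assoc : IsAssoc m3 := by
  intro x y z; funext k; fin_cases k <;> simp [m3] <;> ring
theorem m4_assoc : IsAssoc m4 := by
  intro x y z; funext k; fin_cases k <;> simp [m4] <;> ring

theorem e2v_ne_zero : (![0,1] : V2) ≠ 0 := by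
  intro h
  have := congrFun h 1
  simp at this

theorem v2_top_ne_bot : (⊤ : Submodule ℂ V2) ≠ ⊥ := by
  intro h
  have : (![0,1] : V2) ∈ (⊥ : Submodule ℂ V2) := h ▸ Submodule.mem_top
  rw [Submodule.mem_bot] at this
  exact e2v_ne_zero this

/-- helper: an ideal containing a vector with second-coord multiple gives e2 ∈ I -/
theorem e2_mem_of_scaled {I : Submodule ℂ V2} {c : ℂ} (hc : c ≠ 0)
    (h : (![0, c] : V2) ∈ I) : (![0,1] : V2) ∈ I := by
  have : (![0,(1:ℂ)] : V2) = c⁻¹ • ![0, c] := by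
    funext k; fin_cases k <;> simp [hc]
  rw [this]
  exact Submodule.smul_mem _ _ h

theorem e2_self_scaled (v : V2) (h : v 0 = 0) : v = v 1 • ![0,1] := by
  funext k; fin_cases k <;> simp [h]

/-- for each of the four algebras: any nonzero ideal contains (0,1) -/
theorem indec_of_e2 {μ : V2 → V2 → V2}
    (key : ∀ I : Submodule ℂ V2, IsIdeal μ I → ∀ v ∈ I, v ≠ 0 → (![0,1] : V2) ∈ I) :
    Indecomposable μ := by
  rintro ⟨I, J, hI, hJ, hI0, hJ0, hc⟩
  obtain ⟨v, hvI, hv⟩ := Submodule.exists_mem_ne_zero_of_ne_bot hI0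
  obtain ⟨w, hwJ, hw⟩ := Submodule.exists_mem_ne_zero_of_ne_bot hJ0
  have h1 := key I hI v hvI hv
  have h2 := key J hJ w hwJ hw
  have := Submodule.disjoint_def.mp hc.disjoint _ h1 h2
  exact e2v_ne_zero this

theorem m1_indec : Indecomposable m1 := by
  apply indec_of_e2
  intro I hI v hv hv0
  by_cases h0 : v 0 = 0
  · have h1 : v 1 ≠ 0 := by
      intro h1; exact hv0 (by funext k; fin_cases k <;> simp [h0, h1])
    exact e2_mem_of_scaled h1 (by
      have hvv : v = ![0, v 1] := by funext k; fin_cases k <;> simp [h0]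
      exact hvv ▸ hv)
  · have : m1 v v ∈ I := (hI v v hv).1
    have he : m1 v v = ![0, v 0 * v 0] := m1_eq v v
    exact e2_mem_of_scaled (mul_ne_zero h0 h0) (he ▸ this)

theorem m2_indec : Indecomposable m2 := by
  apply indec_of_e2
  intro I hI v hv hv0
  by_cases h0 : v 0 = 0
  · have h1 : v 1 ≠ 0 := by
      intro h1; exact hv0 (by funext k; fin_cases k <;> simp [h0, h1])
    exact e2_mem_of_scaled h1 (by
      have hvv : v = ![0, v 1] := by funext k; fin_cases k <;> simp [h0]
      exact hvv ▸ hv)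
  · have : m2 v ![0,1] ∈ I := (hI v ![0,1] hv).1
    have he : m2 v ![0,1] = ![0, v 0] := by
      rw [m2_eq]; norm_num
    exact e2_mem_of_scaled h0 (he ▸ this)

theorem m3_indec : Indecomposable m3 := by
  apply indec_of_e2
  intro I hI v hv hv0
  by_cases h0 : v 0 = 0
  · have h1 : v 1 ≠ 0 := by
      intro h1; exact hv0 (by funext k; fin_cases k <;> simp [h0, h1])
    exact e2_mem_of_scaled h1 (by
      have hvv : v = ![0, v 1] := by funext k; fin_cases k <;> simp [h0]
      exact hvv ▸ hv)
  · have : m3 ![0,1] v ∈ I := (hI v ![0,1] hv).2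
    have he : m3 ![0,1] v = ![0, v 0] := by
      rw [m3_eq]; norm_num
    exact e2_mem_of_scaled h0 (he ▸ this)

theorem m4_indec : Indecomposable m4 := by
  apply indec_of_e2
  intro I hI v hv hv0
  by_cases h0 : v 0 = 0
  · have h1 : v 1 ≠ 0 := by
      intro h1; exact hv0 (by funext k; fin_cases k <;> simp [h0, h1])
    exact e2_mem_of_scaled h1 (by
      have hvv : v = ![0, v 1] := by funext k; fin_cases k <;> simp [h0]
      exact hvv ▸ hv)
  · have : m4 v ![0,1] ∈ I := (hI v ![0,1] hv).1
    have he : m4 v ![0,1] = ![0, v 0] := by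
      rw [m4_eq]; norm_num
    exact e2_mem_of_scaled h0 (he ▸ this)

end parts12

section part2

variable {μ ν : V2 → V2 → V2}

/-- triple products vanish -/
def TZ (μ : V2 → V2 → V2) : Prop := ∀ x y z : V2, μ (μ x y) z = 0

theorem tz_transfer (h : Iso μ ν) (hμ : TZ μ) : TZ ν := by
  obtain ⟨f, hf⟩ := h
  intro x y z
  have : ν (ν x y) z = ν (ν (f (f.symm x)) (f (f.symm y))) (f (f.symm z)) := by
    simp
  rw [this, ← hf, ← hf, hμ, map_zero]

theorem comm_transfer (h : Iso μ ν) (hμ : ∀ x y, μ x y = μ y x) : ∀ x y, ν x y = ν y x := by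
  obtain ⟨f, hf⟩ := h
  intro x y
  have h1 : ν x y = ν (f (f.symm x)) (f (f.symm y)) := by simp
  have h2 : ν y x = ν (f (f.symm y)) (f (f.symm x)) := by simp
  rw [h1, h2, ← hf, ← hf, hμ]

theorem lid_transfer (h : Iso μ ν) (hμ : ∃ e, ∀ x, μ e x = x) : ∃ e, ∀ x, ν e x = x := by
  obtain ⟨f, hf⟩ := h
  obtain ⟨e, he⟩ := hμ
  refine ⟨f e, fun x => ?_⟩
  have : ν (f e) x = ν (f e) (f (f.symm x)) := by simp
  rw [this, ← hf, he, f.apply_symm_apply]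

theorem m1_tz : TZ m1 := by
  intro x y z
  funext k; fin_cases k <;> simp [m1]

theorem m2_not_tz : ¬ TZ m2 := by
  intro h
  have := congrFun (h ![1,0] ![1,0] ![1,0]) 0
  simp [m2] at this

theorem m3_not_tz : ¬ TZ m3 := by
  intro h
  have := congrFun (h ![1,0] ![1,0] ![1,0]) 0
  simp [m3] at this

theorem m4_not_tz : ¬ TZ m4 := by
  intro h
  have := congrFun (h ![1,0] ![1,0] ![1,0]) 0
  simp [m4] at this

theorem m4_comm : ∀ x y, m4 x y = m4 y x := by
  intro x y; funext k; fin_cases k <;> simp [m4] <;> ring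

theorem m2_not_comm : ¬ (∀ x y, m2 x y = m2 y x) := by
  intro h
  have := congrFun (h ![1,0] ![0,1]) 1
  simp [m2] at this

theorem m3_not_comm : ¬ (∀ x y, m3 x y = m3 y x) := by
  intro h
  have := congrFun (h ![1,0] ![0,1]) 1
  simp [m3] at this

theorem m2_lid : ∃ e, ∀ x, m2 e x = x := by
  refine ⟨![1,0], fun x => ?_⟩
  funext k; fin_cases k <;> simp [m2]

theorem m3_not_lid : ¬ ∃ e, ∀ x, m3 e x = x := by
  rintro ⟨e, he⟩
  have := congrFun (he ![0,1]) 1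
  simp [m3] at this

-- the six pairwise non-isomorphisms
theorem ni12 : ¬ Iso m1 m2 := fun h => m2_not_tz (tz_transfer h m1_tz)
theorem ni13 : ¬ Iso m1 m3 := fun h => m3_not_tz (tz_transfer h m1_tz)
theorem ni14 : ¬ Iso m1 m4 := fun h => m4_not_tz (tz_transfer h m1_tz)
theorem ni23 : ¬ Iso m2 m3 := fun h => m3_not_lid (lid_transfer h m2_lid)
theorem ni42 : ¬ Iso m4 m2 := fun h => m2_not_comm (comm_transfer h m4_comm)
theorem ni43 : ¬ Iso m4 m3 := fun h => m3_not_comm (comm_transfer h m4_comm)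

end part2

section isobuilders

variable {μ : V2 → V2 → V2}

theorem bl_sub_right (hb : IsBilinear μ) (x y y' : V2) : μ x (y - y') = μ x y - μ x y' := by
  have h := hb.2 (-1) x y' y
  have : y - y' = (-1 : ℂ) • y' + y := by module
  rw [this, h]; module

theorem bl_sub_left (hb : IsBilinear μ) (x x' y : V2) : μ (x - x') y = μ x y - μ x' y := by
  have h := hb.1 (-1) x' x y
  have : x - x' = (-1 : ℂ) • x' + x := by module
  rw [this, h]; module

theorem iso_m1 (hb : IsBilinear μ) (v w : V2) (hd : dt v w ≠ 0)
    (hvv : μ v v = w) (hvw : μ v w = 0) (hwv : μ w v = 0) (hww : μ w w = 0) : Iso μ m1 := by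
  apply iso_of_equiv (mkE v w hd)
  intro a b
  rw [mkE_apply, mkE_apply, bl_expand hb, m1_eq, mkE_apply, hvv, hvw, hwv, hww]
  simp
  try module

theorem iso_m2 (hb : IsBilinear μ) (v w : V2) (hd : dt v w ≠ 0)
    (hvv : μ v v = v) (hvw : μ v w = w) (hwv : μ w v = 0) (hww : μ w w = 0) : Iso μ m2 := by
  apply iso_of_equiv (mkE v w hd)
  intro a b
  rw [mkE_apply, mkE_apply, bl_expand hb, m2_eq, mkE_apply, hvv, hvw, hwv, hww]
  simp
  try module

theorem iso_m3 (hb : IsBilinear μ) (v w : V2) (hd : dt v w ≠ 0)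
    (hvv : μ v v = v) (hvw : μ v w = 0) (hwv : μ w v = w) (hww : μ w w = 0) : Iso μ m3 := by
  apply iso_of_equiv (mkE v w hd)
  intro a b
  rw [mkE_apply, mkE_apply, bl_expand hb, m3_eq, mkE_apply, hvv, hvw, hwv, hww]
  simp
  try module

theorem iso_m4 (hb : IsBilinear μ) (v w : V2) (hd : dt v w ≠ 0)
    (hvv : μ v v = v) (hvw : μ v w = w) (hwv : μ w v = w) (hww : μ w w = 0) : Iso μ m4 := by
  apply iso_of_equiv (mkE v w hd)
  intro a b
  rw [mkE_apply, mkE_apply, bl_expand hb, m4_eq, mkE_apply, hvv, hvw, hwv, hww]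
  simp
  try module

end isobuilders

section branchN

variable {μ : V2 → V2 → V2}

/-- no nonzero idempotent ⇒ square being a multiple forces zero multiple -/
theorem no_idem_sq (hid : ¬ ∃ e : V2, e ≠ 0 ∧ μ e e = e) (hb : IsBilinear μ)
    {x : V2} {c : ℂ} (hx : x ≠ 0) (h : μ x x = c • x) : c = 0 := by
  by_contra hc
  apply hid
  refine ⟨c⁻¹ • x, smul_ne_zero (inv_ne_zero hc) hx, ?_⟩
  rw [bl_smul_left hb, bl_smul_right hb, h]
  rw [smul_smul, smul_smul]
  rw [show c⁻¹ * c⁻¹ * c = c⁻¹ by field_simp]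

theorem dt_self_smul (e : V2) (c : ℂ) : dt e (c • e) = 0 := by
  unfold dt; simp; ring

theorem mult_of_dt_zero {v w : V2} (hv : v ≠ 0) (hd : dt v w = 0) : ∃ c : ℂ, w = c • v := by
  by_contra h
  push_neg at h
  exact dt_ne_zero hv h hd

theorem branchN (hb : IsBilinear μ) (ha : IsAssoc μ) (hi : Indecomposable μ)
    (hid : ¬ ∃ e : V2, e ≠ 0 ∧ μ e e = e) : Iso μ m1 := by
  by_cases hex : ∃ x, dt x (μ x x) ≠ 0
  · obtain ⟨x, hd⟩ := hex
    set s := μ x x with hs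
    have hx0 : x ≠ 0 := by
      intro h; rw [h] at hd; exact hd (by unfold dt; simp)
    have hsx : μ s x = μ x s := ha x x x
    obtain ⟨p, q, hpq⟩ := decompose hd (μ x s)
    have hss : μ s s = (q*p) • x + (p + q*q) • s := by
      have h1 : μ s s = μ x (μ x s) := ha x x s
      rw [h1, hpq, bl_add_right hb, bl_smul_right hb, bl_smul_right hb, ← hs, hpq]
      module
    -- claim p = 0 and q = 0
    have hp0q0 : p = 0 ∧ q = 0 := by
      by_contra hpq0
      -- get roots
      obtain ⟨r, hr⟩ := IsAlgClosed.exists_pow_nat_eq (k := ℂ) (q^2 + 4*p) (by norm_num : 0 < 2)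
      -- a nonzero root L exists, with other root N
      obtain ⟨L, N, hsum, hprod, hL⟩ :
          ∃ L N : ℂ, L + N = q ∧ L * N = -p ∧ L ≠ 0 := by
        have hsum : (q+r)/2 + (q-r)/2 = q := by ring
        have hprod : ((q+r)/2) * ((q-r)/2) = -p := by
          field_simp
          linear_combination -hr
        by_cases h1 : (q+r)/2 ≠ 0
        · exact ⟨_, _, hsum, hprod, h1⟩
        · push_neg at h1
          refine ⟨(q-r)/2, (q+r)/2, by ring, by linear_combination hprod, ?_⟩
          intro h2
          apply hpq0
          have hq : q = 0 := by linear_combination h1 + h2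
          have hrr : r = 0 := by linear_combination h1 - h2
          rw [hq, hrr] at hr
          exact ⟨by linear_combination (-1/4:ℂ) * hr, hq⟩
      by_cases hLN : L ≠ N
      · -- y := s - N • x is a scaled idempotent
        set y := s - N • x with hy
        have hy0 : y ≠ 0 := by
          intro h
          rw [hy] at h
          have : s = N • x := sub_eq_zero.mp h
          exact hd (by rw [this]; exact dt_self_smul x N)
        have hyy : μ y y = (L * (L - N)) • y := by
          have hye : y = (-N) • x + (1:ℂ) • s := by rw [hy]; module
          rw [hye, bl_expand hb, ← hs, hpq, hsx, hpq, hss]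
          rw [show ((L * (L - N)) • ((-N) • x + (1:ℂ) • s) : V2)
              = (L*(L-N)*(-N)) • x + (L*(L-N)) • s by module]
          match_scalars
          · linear_combination (N - q - L) * hsum + hprod
          · linear_combination (L*N) * hsum + (q - 2*N) * hprod
        have := no_idem_sq hid hb hy0 hyy
        exact absurd this (by
          intro h
          rcases mul_eq_zero.mp h with h' | h'
          · exact hL h'
          · exact hLN (sub_eq_zero.mp h'))
      · push_neg at hLN
        -- double root: explicit idempotent
        apply hid
        have hq2 : q = 2*L := by linear_combination -hsum - hLN
        have hp2 : p = -(L^2) := by linear_combination L * hLN + hprod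
        rw [hq2, hp2] at hpq hss
        obtain ⟨M, hM⟩ : ∃ M : ℂ, L * M = 1 := ⟨L⁻¹, mul_inv_cancel₀ hL⟩
        refine ⟨(2*M) • x - (M^2) • s, ?_, ?_⟩
        · intro h
          have : s = (2*L) • x := by
            have h' := sub_eq_zero.mp h
            have h2 := congrArg (fun v : V2 => (L^2 : ℂ) • v) h'
            simp only [smul_smul] at h2
            rw [show L^2 * (2*M) = 2*L by linear_combination (2*L)*hM,
              show L^2 * (M^2) = (1:ℂ) by linear_combination (L*M + 1) * hM,
              one_smul] at h2
            exact h2.symm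
          exact hd (by rw [this]; exact dt_self_smul x _)
        · have he : (2*M) • x - (M^2) • s = (2*M) • x + (-(M^2)) • s := by module
          rw [he, bl_expand hb, ← hs, hpq, hsx, hpq, hss]
          match_scalars
          · linear_combination (M^2*(3*L*M - 5)) * hM
          · linear_combination (-2*M*(L^2*M^2 - L*M - 1)) * hM
    obtain ⟨hp, hq⟩ := hp0q0
    rw [hp, hq] at hpq hss
    simp at hpq hss
    exact iso_m1 hb x s hd rfl hpq (hpq ▸ hsx) hss
  · -- all squares are multiples, hence zero; algebra is trivial; decomposable
    push_neg at hex
    have hsq : ∀ x : V2, μ x x = 0 := by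
      intro x
      by_cases hx : x = 0
      · rw [hx]; exact bl_zero_left hb 0
      · obtain ⟨c, hc⟩ := mult_of_dt_zero hx (hex x)
        have := no_idem_sq hid hb hx hc
        rw [hc, this, zero_smul]
    have hpol : ∀ x y : V2, μ x y + μ y x = 0 := by
      intro x y
      have h := hsq (x + y)
      rw [bl_add_left hb, bl_add_right hb, bl_add_right hb, hsq, hsq] at h
      rw [← h]; module
    set E1 : V2 := ![1,0]
    set E2 : V2 := ![0,1]
    set V := μ E1 E2 with hV
    have hE1V : μ E1 V = 0 := by
      have h := ha E1 E1 E2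
      rw [hsq E1, bl_zero_left hb] at h
      exact h.symm
    have hVE2 : μ V E2 = 0 := by
      have h := ha E1 E2 E2
      rw [hsq E2, bl_zero_right hb] at h
      exact h
    have hVzero : V = 0 := by
      have hdec : V = V 0 • E1 + V 1 • E2 := vec_decomp V
      have h1 : μ E1 V = V 1 • V := by
        conv_lhs => rw [hdec]
        rw [bl_add_right hb, bl_smul_right hb, bl_smul_right hb, hsq E1, ← hV]
        module
      have h2 : μ V E2 = V 0 • V := by
        conv_lhs => rw [hdec]
        rw [bl_add_left hb, bl_smul_left hb, bl_smul_left hb, hsq E2, ← hV]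
        module
      rw [hE1V] at h1
      rw [hVE2] at h2
      rcases smul_eq_zero.mp h1.symm with h | h
      · rcases smul_eq_zero.mp h2.symm with h' | h'
        · rw [hdec, h, h']; module
        · exact h'
      · exact h
    have hE2E1 : μ E2 E1 = 0 := by
      have := hpol E1 E2
      rw [← hV, hVzero, zero_add] at this
      exact this
    have hzero : ∀ x y : V2, μ x y = 0 := by
      intro x y
      rw [vec_decomp x, vec_decomp y, bl_expand hb, hsq, hsq, ← hV, hVzero, hE2E1]
      module
    exfalso
    apply hi
    refine ⟨Submodule.span ℂ {E1}, Submodule.span ℂ {E2}, ?_, ?_, ?_, ?_, ?_⟩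
    · intro a b hab
      constructor <;> (rw [hzero]; exact Submodule.zero_mem _)
    · intro a b hab
      constructor <;> (rw [hzero]; exact Submodule.zero_mem _)
    · rw [Ne, Submodule.span_singleton_eq_bot]
      intro h; have := congrFun h 0; simp [E1] at this
    · rw [Ne, Submodule.span_singleton_eq_bot]
      intro h; have := congrFun h 1; simp [E2] at this
    · exact isCompl_span (by unfold dt; simp [E1, E2])

end branchN

section branchE

variable {μ : V2 → V2 → V2}

theorem dt_sub_smul (e x : V2) (c : ℂ) : dt e (x - c • e) = dt e x := by
  unfold dt; simp only [Pi.sub_apply, Pi.smul_apply, smul_eq_mul]; ring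

theorem span_ne_bot {v : V2} (hv : v ≠ 0) : Submodule.span ℂ {v} ≠ ⊥ := by
  rw [Ne, Submodule.span_singleton_eq_bot]; exact hv

theorem branchE (hb : IsBilinear μ) (ha : IsAssoc μ) (hi : Indecomposable μ)
    (e : V2) (he0 : e ≠ 0) (he : μ e e = e) : Iso μ m2 ∨ Iso μ m3 ∨ Iso μ m4 := by
  -- a vector independent from e
  obtain ⟨x, hd⟩ : ∃ x, dt e x ≠ 0 := by
    rcases nonzero_coord he0 with h | h
    · exact ⟨![0,1], by unfold dt; simpa using h⟩
    · exact ⟨![1,0], by unfold dt; simpa using h⟩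
  have lree : ∀ z, μ e (μ e z) = μ e z := fun z => by
    have h := ha e e z; rw [he] at h; exact h.symm
  have rree : ∀ z, μ (μ z e) e = μ z e := fun z => by
    have h := ha z e e; rw [he] at h; exact h
  set P := μ e (μ x e) with hP
  have A3 : μ (μ e x) e = P := ha e x e
  have B1 : μ e P = P := lree _
  have B2 : μ P e = P := by
    have h := ha e (μ x e) e
    rw [rree x] at h
    rw [h]
  by_cases h10 : μ e x - P ≠ 0
  · -- m2 case
    set u := μ e x - P with hu
    have heu : μ e u = u := by
      rw [hu, bl_sub_right hb, lree, B1]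
    have hue : μ u e = 0 := by
      rw [hu, bl_sub_left hb, A3, B2, sub_self]
    have hind : ∀ c : ℂ, u ≠ c • e := by
      intro c hc
      rw [hc, bl_smul_left hb, he] at hue
      rcases smul_eq_zero.mp hue with h | h
      · rw [h, zero_smul] at hc; exact h10 hc
      · exact he0 h
    have hde : dt e u ≠ 0 := dt_ne_zero he0 hind
    have huu : μ u u = 0 := by
      conv_lhs => rw [show μ u u = μ u (μ e u) by rw [heu]]
      rw [← ha, hue, bl_zero_left hb]
    exact Or.inl (iso_m2 hb e u hde he heu hue huu)
  push_neg at h10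
  by_cases h01 : μ x e - P ≠ 0
  · -- m3 case
    set u := μ x e - P with hu
    have heu : μ e u = 0 := by
      rw [hu, bl_sub_right hb, ← hP, B1, sub_self]
    have hue : μ u e = u := by
      rw [hu, bl_sub_left hb, rree, B2]
    have hind : ∀ c : ℂ, u ≠ c • e := by
      intro c hc
      rw [hc, bl_smul_right hb, he] at heu
      rcases smul_eq_zero.mp heu with h | h
      · rw [h, zero_smul] at hc; exact h01 hc
      · exact he0 h
    have hde : dt e u ≠ 0 := dt_ne_zero he0 hind
    have huu : μ u u = 0 := by
      conv_lhs => rw [show μ u u = μ (μ u e) u by rw [hue]]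
      rw [ha, heu, bl_zero_right hb]
    exact Or.inr (Or.inl (iso_m3 hb e u hde he heu hue huu))
  push_neg at h01
  by_cases h00 : x - μ e x - μ x e + P ≠ 0
  · -- contradiction: decomposable
    exfalso
    set u := x - μ e x - μ x e + P with hu
    have heu : μ e u = 0 := by
      rw [hu, bl_add_right hb, bl_sub_right hb, bl_sub_right hb, lree, ← hP, B1]
      module
    have hue : μ u e = 0 := by
      rw [hu, bl_add_left hb, bl_sub_left hb, bl_sub_left hb, A3, rree, B2]
      module
    have hind : ∀ c : ℂ, u ≠ c • e := by
      intro c hc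
      rw [hc, bl_smul_right hb, he] at heu
      rcases smul_eq_zero.mp heu with h | h
      · rw [h, zero_smul] at hc; exact h00 hc
      · exact he0 h
    have hde : dt e u ≠ 0 := dt_ne_zero he0 hind
    obtain ⟨α, β, hαβ⟩ := decompose hde (μ u u)
    have hα : α = 0 := by
      have h1 : μ e (μ u u) = 0 := by
        rw [← ha, heu, bl_zero_left hb]
      rw [hαβ, bl_add_right hb, bl_smul_right hb, bl_smul_right hb, he, heu] at h1
      have : α • e = 0 := by rw [← h1]; module
      rcases smul_eq_zero.mp this with h | h
      · exact h
      · exact absurd h he0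
    rw [hα, zero_smul, zero_add] at hαβ
    apply hi
    refine ⟨Submodule.span ℂ {e}, Submodule.span ℂ {u}, ?_, ?_, span_ne_bot he0,
      span_ne_bot (by simpa using h00), isCompl_span hde⟩
    · rintro a b haI
      obtain ⟨c, hc⟩ := Submodule.mem_span_singleton.mp haI
      obtain ⟨γ, δ, hbd⟩ := decompose hde b
      constructor
      · rw [← hc, hbd, bl_smul_left hb, bl_add_right hb, bl_smul_right hb, bl_smul_right hb,
          he, heu]
        apply Submodule.mem_span_singleton.mpr
        exact ⟨c * γ, by module⟩
      · rw [← hc, hbd, bl_smul_right hb, bl_add_left hb, bl_smul_left hb, bl_smul_left hb,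
          he, hue]
        apply Submodule.mem_span_singleton.mpr
        exact ⟨c * γ, by module⟩
    · rintro a b haI
      obtain ⟨c, hc⟩ := Submodule.mem_span_singleton.mp haI
      obtain ⟨γ, δ, hbd⟩ := decompose hde b
      constructor
      · rw [← hc, hbd, bl_smul_left hb, bl_add_right hb, bl_smul_right hb, bl_smul_right hb,
          hue, hαβ]
        apply Submodule.mem_span_singleton.mpr
        exact ⟨c * δ * β, by module⟩
      · rw [← hc, hbd, bl_smul_right hb, bl_add_left hb, bl_smul_left hb, bl_smul_left hb,
          heu, hαβ]
        apply Submodule.mem_span_singleton.mpr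
        exact ⟨c * δ * β, by module⟩
  push_neg at h00
  -- unital case: μ e x = x = μ x e
  have hxP : x = P := by
    have h1 : μ e x = P := by rwa [sub_eq_zero] at h10
    have h2 : μ x e = P := by rwa [sub_eq_zero] at h01
    rw [h1, h2] at h00
    have h4 : x - P = 0 := by rw [← h00]; module
    exact sub_eq_zero.mp h4
  have hex : μ e x = x := by
    rw [sub_eq_zero] at h10
    exact h10.trans hxP.symm
  have hxe : μ x e = x := by
    rw [sub_eq_zero] at h01
    exact h01.trans hxP.symm
  obtain ⟨α, β, hαβ⟩ := decompose hd (μ x x)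
  obtain ⟨r, hr⟩ := IsAlgClosed.exists_pow_nat_eq (k := ℂ) (β^2 + 4*α) (by norm_num : 0 < 2)
  set L := (β + r)/2 with hL
  set N := (β - r)/2 with hN
  have hsum : L + N = β := by rw [hL, hN]; ring
  have hprod : L * N = -α := by rw [hL, hN]; field_simp; linear_combination -hr
  by_cases hLN : L = N
  · -- m4 case
    have hq2 : β = 2*L := by linear_combination -hsum - hLN
    have hp2 : α = -(L^2) := by linear_combination L * hLN + hprod
    set n := x - L • e with hn
    have hdn : dt e n ≠ 0 := by rw [hn, dt_sub_smul]; exact hd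
    have hen : μ e n = n := by
      rw [hn, bl_sub_right hb, bl_smul_right hb, he, hex]
    have hne : μ n e = n := by
      rw [hn, bl_sub_left hb, bl_smul_left hb, he, hxe]
    have hnn : μ n n = 0 := by
      have h1 : (n : V2) = (1:ℂ) • x + (-L) • e := by rw [hn]; module
      rw [h1, bl_expand hb, hαβ, hxe, hex, he, hq2, hp2]
      match_scalars <;> ring
    exact Or.inr (Or.inr (iso_m4 hb e n hdn he hen hne hnn))
  · -- contradiction: decomposable (two idempotent lines)
    exfalso
    set F := x - N • e with hF
    set G := x - L • e with hG
    have hF0 : F ≠ 0 := by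
      intro h
      rw [hF, sub_eq_zero] at h
      exact hd (by rw [h]; exact dt_self_smul e N)
    have hG0 : G ≠ 0 := by
      intro h
      rw [hG, sub_eq_zero] at h
      exact hd (by rw [h]; exact dt_self_smul e L)
    have hFe : μ F e = F := by rw [hF, bl_sub_left hb, bl_smul_left hb, he, hxe]
    have heF : μ e F = F := by rw [hF, bl_sub_right hb, bl_smul_right hb, he, hex]
    have hGe : μ G e = G := by rw [hG, bl_sub_left hb, bl_smul_left hb, he, hxe]
    have heG : μ e G = G := by rw [hG, bl_sub_right hb, bl_smul_right hb, he, hex]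
    have hFx : μ F x = L • F := by
      rw [hF, bl_sub_left hb, bl_smul_left hb, hex, hαβ]
      rw [show (L • (x - N • e) : V2) = (L * (-N)) • e + L • x by module]
      match_scalars
      · linear_combination hprod
      · linear_combination hsum
    have hxF : μ x F = L • F := by
      rw [hF, bl_sub_right hb, bl_smul_right hb, hxe, hαβ]
      rw [show (L • (x - N • e) : V2) = (L * (-N)) • e + L • x by module]
      match_scalars
      · linear_combination hprod
      · linear_combination hsum
    have hGx : μ G x = N • G := by
      rw [hG, bl_sub_left hb, bl_smul_left hb, hex, hαβ]
      rw [show (N • (x - L • e) : V2) = (N * (-L)) • e + N • x by module]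
      match_scalars
      · linear_combination hprod
      · linear_combination hsum
    have hxG : μ x G = N • G := by
      rw [hG, bl_sub_right hb, bl_smul_right hb, hxe, hαβ]
      rw [show (N • (x - L • e) : V2) = (N * (-L)) • e + N • x by module]
      match_scalars
      · linear_combination hprod
      · linear_combination hsum
    have hdFG : dt F G ≠ 0 := by
      apply dt_ne_zero hF0
      intro c hc
      rw [hG, hF] at hc
      by_cases hc1 : c = 1
      · rw [hc1, one_smul] at hc
        have h2 : (L - N) • e = 0 := by
          rw [show ((L - N) • e : V2) = (x - N • e) - (x - L • e) by module, hc, sub_self]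
        rcases smul_eq_zero.mp h2 with h | h
        · exact hLN (by linear_combination h)
        · exact he0 h
      · have h2 : (c - 1) • x = (c * N - L) • e := by
          rw [show ((c - 1) • x : V2) = c • (x - N • e) - (x - L • e) + (c * N - L) • e
            by module, ← hc, sub_self, zero_add]
        have hx' : x = ((c - 1)⁻¹ * (c * N - L)) • e := by
          have h3 := congrArg (fun v : V2 => (c - 1)⁻¹ • v) h2
          simp only [smul_smul] at h3
          rw [inv_mul_cancel₀ (sub_ne_zero.mpr hc1), one_smul] at h3
          exact h3
        exact hd (by rw [hx']; exact dt_self_smul e _)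
    apply hi
    refine ⟨Submodule.span ℂ {F}, Submodule.span ℂ {G}, ?_, ?_, span_ne_bot hF0,
      span_ne_bot hG0, isCompl_span hdFG⟩
    · rintro a b haI
      obtain ⟨c, hc⟩ := Submodule.mem_span_singleton.mp haI
      obtain ⟨γ, δ, hbd⟩ := decompose hd b
      constructor
      · rw [← hc, hbd, bl_smul_left hb, bl_add_right hb, bl_smul_right hb, bl_smul_right hb,
          hFe, hFx]
        apply Submodule.mem_span_singleton.mpr
        exact ⟨c * γ + c * δ * L, by module⟩
      · rw [← hc, hbd, bl_smul_right hb, bl_add_left hb, bl_smul_left hb, bl_smul_left hb,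
          heF, hxF]
        apply Submodule.mem_span_singleton.mpr
        exact ⟨c * γ + c * δ * L, by module⟩
    · rintro a b haI
      obtain ⟨c, hc⟩ := Submodule.mem_span_singleton.mp haI
      obtain ⟨γ, δ, hbd⟩ := decompose hd b
      constructor
      · rw [← hc, hbd, bl_smul_left hb, bl_add_right hb, bl_smul_right hb, bl_smul_right hb,
          hGe, hGx]
        apply Submodule.mem_span_singleton.mpr
        exact ⟨c * γ + c * δ * N, by module⟩
      · rw [← hc, hbd, bl_smul_right hb, bl_add_left hb, bl_smul_left hb, bl_smul_left hb,
          heG, hxG]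
        apply Submodule.mem_span_singleton.mpr
        exact ⟨c * γ + c * δ * N, by module⟩

end branchE


theorem stmt2 :
    (∀ μ ∈ ({m1, m2, m3, m4} : Set (V2 → V2 → V2)),
        IsBilinear μ ∧ IsAssoc μ ∧ Indecomposable μ ∧
        (⊤ : Submodule ℂ V2) ≠ ⊥) ∧
    (∀ μ ν, μ ∈ ({m1, m2, m3, m4} : Set (V2 → V2 → V2)) →
        ν ∈ ({m1, m2, m3, m4} : Set (V2 → V2 → V2)) → μ ≠ ν → ¬ Iso μ ν) ∧
    (∀ μ : V2 → V2 → V2, IsBilinear μ → IsAssoc μ → Indecomposable μ →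
        (⊤ : Submodule ℂ V2) ≠ ⊥ →
        Iso μ m1 ∨ Iso μ m2 ∨ Iso μ m3 ∨ Iso μ m4) := by
  refine ⟨?_, ?_, ?_⟩
  · intro μ hμ
    simp only [Set.mem_insert_iff, Set.mem_singleton_iff] at hμ
    rcases hμ with rfl | rfl | rfl | rfl
    · exact ⟨m1_bil, m1_assoc, m1_indec, v2_top_ne_bot⟩
    · exact ⟨m2_bil, m2_assoc, m2_indec, v2_top_ne_bot⟩
    · exact ⟨m3_bil, m3_assoc, m3_indec, v2_top_ne_bot⟩
    · exact ⟨m4_bil, m4_assoc, m4_indec, v2_top_ne_bot⟩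
  · intro μ ν hμ hν hne
    simp only [Set.mem_insert_iff, Set.mem_singleton_iff] at hμ hν
    rcases hμ with rfl | rfl | rfl | rfl <;> rcases hν with rfl | rfl | rfl | rfl
    · exact absurd rfl hne
    · exact ni12
    · exact ni13
    · exact ni14
    · exact fun h => ni12 (iso_symm h)
    · exact absurd rfl hne
    · exact ni23
    · exact fun h => ni42 (iso_symm h)
    · exact fun h => ni13 (iso_symm h)
    · exact fun h => ni23 (iso_symm h)
    · exact absurd rfl hne
    · exact fun h => ni43 (iso_symm h)
    · exact fun h => ni14 (iso_symm h)
    · exact ni42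
    · exact ni43
    · exact absurd rfl hne
  · intro μ hb ha hi _
    by_cases hid : ∃ e : V2, e ≠ 0 ∧ μ e e = e
    · obtain ⟨e, he0, he⟩ := hid
      rcases branchE hb ha hi e he0 he with h | h | h
      · exact Or.inr (Or.inl h)
      · exact Or.inr (Or.inr (Or.inl h))
      · exact Or.inr (Or.inr (Or.inr h))
    · exact Or.inl (branchN hb ha hi hid)
end

section
/- For α, β ∈ ℂ with α ≠ 1, β ≠ 1, and α ≠ β and αβ ≠ 1, the 3-dimensional algebras A_α (nonzero products e1e3 = e2, e3e1 = α e2) and A_β (nonzero products e1e3 = e2, e3e1 = β e2) are not isomorphic. -/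
/-- A_α : e1e3 = e2, e3e1 = α·e2 (bilinear extension). -/
def mul (α : ℂ) (x y : Fin 3 → ℂ) : Fin 3 → ℂ :=
  fun k => if k = 1 then x 0 * y 2 + α * (x 2 * y 0) else 0

theorem stmt7 (α β : ℂ) (hα : α ≠ 1) (hβ : β ≠ 1) (hab : α ≠ β)
    (hab1 : α * β ≠ 1) :
    ¬ ∃ f : (Fin 3 → ℂ) ≃ₗ[ℂ] (Fin 3 → ℂ),
        ∀ x y, f (mul α x y) = mul β (f x) (f y) := by
  rintro ⟨f, hf⟩
  set e0 : Fin 3 → ℂ := Pi.single 0 1 with he0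
  set e1 : Fin 3 → ℂ := Pi.single 1 1 with he1
  set e2 : Fin 3 → ℂ := Pi.single 2 1 with he2
  have hm1 : mul α e0 e2 = e1 := by
    funext k; fin_cases k <;> simp [mul, he0, he1, he2, Pi.single_apply]
  have hm2 : mul α e2 e0 = α • e1 := by
    funext k; fin_cases k <;> simp [mul, he0, he1, he2, Pi.single_apply]
  have hm3 : mul α e0 e0 = 0 := by
    funext k; fin_cases k <;> simp [mul, he0, Pi.single_apply]
  have hm4 : mul α e2 e2 = 0 := by
    funext k; fin_cases k <;> simp [mul, he2, Pi.single_apply]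
  have h1 := hf e0 e2
  rw [hm1] at h1
  have h2 := hf e2 e0
  rw [hm2, map_smul] at h2
  have h3 := hf e0 e0
  rw [hm3, map_zero] at h3
  have h4 := hf e2 e2
  rw [hm4, map_zero] at h4
  have hL : f e1 1 = f e0 0 * f e2 2 + β * (f e0 2 * f e2 0) := by
    have := congrFun h1 1; simpa [mul] using this
  have hL0 : f e1 0 = 0 := by
    have := congrFun h1 0; simpa [mul] using this
  have hL2 : f e1 2 = 0 := by
    have := congrFun h1 2; simpa [mul] using this
  have hαL : α * f e1 1 = f e2 0 * f e0 2 + β * (f e2 2 * f e0 0) := by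
    have := congrFun h2 1; simpa [mul] using this
  have hac : 0 = f e0 0 * f e0 2 + β * (f e0 2 * f e0 0) := by
    have := congrFun h3 1; simpa [mul] using this
  have hbd : 0 = f e2 0 * f e2 2 + β * (f e2 2 * f e2 0) := by
    have := congrFun h4 1; simpa [mul] using this
  set a := f e0 0
  set b := f e2 0
  set c := f e0 2
  set d := f e2 2
  set L := f e1 1 with hLdef
  have hLne : L ≠ 0 := by
    intro h
    have hfz : f e1 = 0 := by
      funext k
      fin_cases k
      · exact hL0
      · exact h
      · exact hL2
    have : e1 = 0 := f.injective (by simpa using hfz)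
    have := congrFun this 1
    simp [he1] at this
  have haβ : (1 : ℂ) - α * β ≠ 0 := sub_ne_zero.mpr (Ne.symm hab1)
  have key : a * d * (1 - β ^ 2) = L * (1 - α * β) := by
    linear_combination β * hαL - hL
  have hadne : a * d * (1 - β ^ 2) ≠ 0 := by
    rw [key]; exact mul_ne_zero hLne haβ
  have had : a * d ≠ 0 := fun h => hadne (by rw [h]; ring)
  have hβ2 : (1 : ℂ) - β ^ 2 ≠ 0 := fun h => hadne (by rw [h]; ring)
  have hβm1 : (1 : ℂ) + β ≠ 0 := fun h => hβ2 (by linear_combination (1 - β) * h)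
  have ha : a ≠ 0 := fun h => had (by rw [h]; ring)
  have hd : d ≠ 0 := fun h => had (by rw [h]; ring)
  have hc : c = 0 := by
    have : a * c * (1 + β) = 0 := by linear_combination -hac
    rcases mul_eq_zero.mp this with h | h
    · rcases mul_eq_zero.mp h with h | h
      · exact absurd h ha
      · exact h
    · exact absurd h hβm1
  have hb : b = 0 := by
    have : b * d * (1 + β) = 0 := by linear_combination -hbd
    rcases mul_eq_zero.mp this with h | h
    · rcases mul_eq_zero.mp h with h | h
      · exact h
      · exact absurd h hd
    · exact absurd h hβm1
  have : α * (a * d) = β * (a * d) := by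
    rw [hb, hc] at hL hαL
    linear_combination hαL - α * hL
  exact hab (mul_right_cancel₀ had this)
end
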